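/- Let V ∈ ℝ^{N×R} and V̂ ∈ ℝ^{N×r} both have orthonormal columns (VᵀV = I_R, V̂ᵀV̂ = I_r), and suppose the spectral norm bound ‖(I − VVᵀ) V̂‖₂ ≤ ε holds. Then for every n ∈ ℝ^N with ‖n − V̂(V̂ᵀ n)‖₂ ≤ η one has ‖n − V(Vᵀ n)‖₂ ≤ η + ε ‖n‖₂; that is, if the current basis V captures the new window basis V̂ to accuracy ε, then V approximates every vector that V̂ approximates, up to the additional error ε‖n‖₂. -/

import Mathlib

/-!
Write `P = V Vᵀ` and `P̂ = V̂ V̂ᵀ`, both orthogonal projections. Then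
`n - P n = (I - P)(n - P̂ n) + (I - P) V̂ (V̂ᵀ n)`. The first term has norm at most
`‖n - P̂ n‖ ≤ η` because `I - P` is a contraction, and the second at most `ε ‖V̂ᵀ n‖ ≤ ε ‖n‖`
by the capture bound and Bessel's inequality.
-/

open Matrix

section OrthonormalColumns

variable {R ι κ : Type*} [CommRing R] [Fintype ι] [Fintype κ]

lemma sum_sq_eq_dotProduct_self (x : ι → R) : ∑ i, x i ^ 2 = x ⬝ᵥ x := by
  simp only [dotProduct, sq]

lemma sub_projection_eq_add {μ : Type*} [Fintype μ] [DecidableEq ι]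
    (V : Matrix ι κ R) (W : Matrix ι μ R) (n : ι → R) :
    n - V *ᵥ (Vᵀ *ᵥ n) = (n - W *ᵥ (Wᵀ *ᵥ n)) - V *ᵥ (Vᵀ *ᵥ (n - W *ᵥ (Wᵀ *ᵥ n)))
      + ((1 - V * Vᵀ) * W) *ᵥ (Wᵀ *ᵥ n) := by
  simp only [← mulVec_mulVec, sub_mulVec, one_mulVec, mulVec_sub]
  abel

variable {M : Matrix ι κ R}

lemma dotProduct_mulVec_transpose_mulVec (x : ι → R) :
    x ⬝ᵥ M *ᵥ (Mᵀ *ᵥ x) = Mᵀ *ᵥ x ⬝ᵥ Mᵀ *ᵥ x := by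
  rw [dotProduct_mulVec, ← mulVec_transpose]

variable [DecidableEq κ]

lemma dotProduct_self_mulVec_of_transpose_mul_self (hM : Mᵀ * M = 1) (y : κ → R) :
    M *ᵥ y ⬝ᵥ M *ᵥ y = y ⬝ᵥ y := by
  rw [dotProduct_mulVec, ← mulVec_transpose, mulVec_mulVec, hM, one_mulVec]

lemma sum_sq_sub_projection (hM : Mᵀ * M = 1) (x : ι → R) :
    ∑ i, (x - M *ᵥ (Mᵀ *ᵥ x)) i ^ 2 = ∑ i, x i ^ 2 - ∑ k, (Mᵀ *ᵥ x) k ^ 2 := by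
  simp only [sum_sq_eq_dotProduct_self]
  rw [sub_dotProduct, dotProduct_sub, dotProduct_sub, dotProduct_comm (M *ᵥ _) x,
    dotProduct_mulVec_transpose_mulVec, dotProduct_self_mulVec_of_transpose_mul_self hM]
  ring

end OrthonormalColumns

section EuclideanNorm

variable {ι κ : Type*} [Fintype ι] [Fintype κ]

lemma sqrt_sum_sq_add_le (u v : ι → ℝ) :
    √(∑ i, (u + v) i ^ 2) ≤ √(∑ i, u i ^ 2) + √(∑ i, v i ^ 2) := by
  simpa only [EuclideanSpace.norm_eq, Real.norm_eq_abs, sq_abs, ← WithLp.toLp_add] using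
    norm_add_le (WithLp.toLp 2 u) (WithLp.toLp 2 v)

variable [DecidableEq κ] {M : Matrix ι κ ℝ}

lemma sum_sq_sub_projection_le (hM : Mᵀ * M = 1) (x : ι → ℝ) :
    ∑ i, (x - M *ᵥ (Mᵀ *ᵥ x)) i ^ 2 ≤ ∑ i, x i ^ 2 := by
  rw [sum_sq_sub_projection hM]
  linarith [show 0 ≤ ∑ k, (Mᵀ *ᵥ x) k ^ 2 by positivity]

lemma sum_sq_transpose_mulVec_le (hM : Mᵀ * M = 1) (x : ι → ℝ) :
    ∑ k, (Mᵀ *ᵥ x) k ^ 2 ≤ ∑ i, x i ^ 2 := by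
  linarith [sum_sq_sub_projection hM x, show 0 ≤ ∑ i, (x - M *ᵥ (Mᵀ *ᵥ x)) i ^ 2 by positivity]

end EuclideanNorm

theorem basis_capture_implies_approximation_general
    (N R r : ℕ) (V : Matrix (Fin N) (Fin R) ℝ) (hV : Vᵀ * V = 1)
    (Vhat : Matrix (Fin N) (Fin r) ℝ) (hVhat : Vhatᵀ * Vhat = 1)
    (ε η : ℝ) (hε : 0 ≤ ε)
    (hproj : ∀ y : Fin r → ℝ,
      Real.sqrt (∑ i, (((1 - V * Vᵀ) * Vhat).mulVec y i) ^ 2)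
        ≤ ε * Real.sqrt (∑ α, (y α) ^ 2)) :
    ∀ n : Fin N → ℝ,
      Real.sqrt (∑ i, (n i - Vhat.mulVec (Vhatᵀ.mulVec n) i) ^ 2) ≤ η →
      Real.sqrt (∑ i, (n i - V.mulVec (Vᵀ.mulVec n) i) ^ 2)
        ≤ η + ε * Real.sqrt (∑ i, (n i) ^ 2) := by
  intro n hn
  set u := n - Vhat *ᵥ (Vhatᵀ *ᵥ n)
  have hresidual : √(∑ i, (u - V *ᵥ (Vᵀ *ᵥ u)) i ^ 2) ≤ η :=
    (Real.sqrt_le_sqrt (sum_sq_sub_projection_le hV u)).trans hn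
  have hcapture : √(∑ i, (((1 - V * Vᵀ) * Vhat) *ᵥ (Vhatᵀ *ᵥ n)) i ^ 2)
      ≤ ε * √(∑ i, n i ^ 2) :=
    (hproj _).trans (mul_le_mul_of_nonneg_left
      (Real.sqrt_le_sqrt (sum_sq_transpose_mulVec_le hVhat n)) hε)
  change √(∑ i, (n - V *ᵥ (Vᵀ *ᵥ n)) i ^ 2) ≤ _
  rw [sub_projection_eq_add V Vhat n]
  exact (sqrt_sum_sq_add_le _ _).trans (add_le_add hresidual hcapture)

/-- If the current basis `V` captures the new window basis `V̂` to spectral-norm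
accuracy `ε` (expressed via the operator characterization
`‖(I − VVᵀ)V̂ y‖₂ ≤ ε ‖y‖₂` for all `y`), then `V` approximates, up to the
additional error `ε‖n‖₂`, every vector that `V̂` approximates. -/
theorem basis_capture_implies_approximation
    (N R r : ℕ) (V : Matrix (Fin N) (Fin R) ℝ) (hV : Vᵀ * V = 1)
    (Vhat : Matrix (Fin N) (Fin r) ℝ) (hVhat : Vhatᵀ * Vhat = 1)
    (ε η : ℝ) (hε : 0 ≤ ε) (hη : 0 ≤ η)
    (hproj : ∀ y : Fin r → ℝ,
      Real.sqrt (∑ i, (((1 - V * Vᵀ) * Vhat).mulVec y i) ^ 2)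
        ≤ ε * Real.sqrt (∑ α, (y α) ^ 2)) :
    ∀ n : Fin N → ℝ,
      Real.sqrt (∑ i, (n i - Vhat.mulVec (Vhatᵀ.mulVec n) i) ^ 2) ≤ η →
      Real.sqrt (∑ i, (n i - V.mulVec (Vᵀ.mulVec n) i) ^ 2)
        ≤ η + ε * Real.sqrt (∑ i, (n i) ^ 2) :=
  basis_capture_implies_approximation_general N R r V hV Vhat hVhat ε η hε hproj
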